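/- arXiv:1510.07107 — 3 statements merged into one kernel-verified Lean document; each statement's English description precedes it below -/
import Mathlib

section
/- Let C ⊆ ℝ^d be nonempty closed convex, f : ℝ^d → ℝ convex, α > 0, v ∈ ℝ^d, and x ∈ C. If p := prox_{αf}(v) and x⁺ := P_C(p), then ‖x⁺ - x‖² ≤ ‖v - x‖² + 2α(f(x) - f(p)) - ‖v - p‖² - ‖p - x⁺‖². -/
/-!
Both `p = prox_{αf}(v)` and `x⁺ = P_C(p)` minimize a convex function plus `½‖· - center‖²`, so
each satisfies a first-order inequality obtained by moving towards `x` along a segment and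
letting the step size go to `0`: `⟪v - p, x - p⟫ ≤ α (f x - f p)` and `⟪p - x⁺, x - x⁺⟫ ≤ 0`.
Expanding `‖v - x‖²` around `p` and `‖p - x‖²` around `x⁺` and adding the two inequalities gives
the claim.
-/

open Filter Topology Set

lemma le_of_forall_mem_Ioc_le_add_mul {a b c : ℝ} (h : ∀ t ∈ Ioc (0 : ℝ) 1, a ≤ c + t * b) :
    a ≤ c := by
  have hlim : Tendsto (fun t : ℝ => c + t * b) (𝓝[>] 0) (𝓝 c) :=
    ((by fun_prop : Continuous fun t : ℝ => c + t * b).tendsto' 0 c (by simp)).mono_left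
      nhdsWithin_le_nhds
  exact ge_of_tendsto hlim (mem_of_superset (Ioc_mem_nhdsGT one_pos) h)

section InnerProductSpace

variable {E : Type*} [NormedAddCommGroup E] [InnerProductSpace ℝ E]

lemma norm_sub_add_smul_sub_sq (v p x : E) (t : ℝ) :
    ‖v - (p + t • (x - p))‖ ^ 2 =
      ‖v - p‖ ^ 2 - 2 * t * inner ℝ (v - p) (x - p) + t ^ 2 * ‖x - p‖ ^ 2 := by
  rw [show v - (p + t • (x - p)) = (v - p) - t • (x - p) by abel, norm_sub_sq_real,
    real_inner_smul_right, norm_smul, mul_pow, Real.norm_eq_abs, sq_abs]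
  ring

lemma ConvexOn.inner_sub_le_of_isMinOn_add_half_norm_sq {S : Set E} {φ : E → ℝ}
    (hφ : ConvexOn ℝ S φ) {v p : E} (hp : p ∈ S)
    (hmin : IsMinOn (fun y => φ y + 1 / 2 * ‖v - y‖ ^ 2) S p) {x : E} (hx : x ∈ S) :
    inner ℝ (v - p) (x - p) ≤ φ x - φ p := by
  refine le_of_forall_mem_Ioc_le_add_mul (b := 1 / 2 * ‖x - p‖ ^ 2) fun t ⟨ht0, ht1⟩ => ?_
  have hseg : (1 - t) • p + t • x = p + t • (x - p) := by
    rw [smul_sub, sub_smul, one_smul]; abel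
  have hconv : φ (p + t • (x - p)) ≤ (1 - t) * φ p + t * φ x := by
    simpa only [hseg, smul_eq_mul] using
      hφ.2 hp hx (sub_nonneg.2 ht1) ht0.le (sub_add_cancel 1 t)
  have hmem : p + t • (x - p) ∈ S := by
    simpa only [hseg] using hφ.1 hp hx (sub_nonneg.2 ht1) ht0.le (sub_add_cancel 1 t)
  have hle := isMinOn_iff.1 hmin _ hmem
  simp only [norm_sub_add_smul_sub_sq] at hle
  have hscaled : t * inner ℝ (v - p) (x - p) ≤ t * (φ x - φ p + t * (1 / 2 * ‖x - p‖ ^ 2)) := by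
    nlinarith
  exact le_of_mul_le_mul_left hscaled ht0

lemma Convex.inner_sub_nonpos_of_forall_norm_sub_le {C : Set E} (hC : Convex ℝ C) {p q : E}
    (hq : q ∈ C) (hmin : ∀ y ∈ C, ‖p - q‖ ≤ ‖p - y‖) {x : E} (hx : x ∈ C) :
    inner ℝ (p - q) (x - q) ≤ 0 := by
  have hmin' : IsMinOn (fun y => (fun _ => (0 : ℝ)) y + 1 / 2 * ‖p - y‖ ^ 2) C q :=
    isMinOn_iff.2 fun y hy => by
      have := pow_le_pow_left₀ (norm_nonneg _) (hmin y hy) 2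
      dsimp only; linarith
  simpa using (convexOn_const 0 hC).inner_sub_le_of_isMinOn_add_half_norm_sq hq hmin' hx

end InnerProductSpace

theorem prox_projection_basic_inequality_general
    {d : ℕ} (C : Set (EuclideanSpace ℝ (Fin d)))
    (hCcv : Convex ℝ C)
    (f : EuclideanSpace ℝ (Fin d) → ℝ) (hf : ConvexOn ℝ Set.univ f)
    (α : ℝ) (hα : 0 < α) (v x p xplus : EuclideanSpace ℝ (Fin d))
    (hx : x ∈ C)
    (hp : ∀ y, α * f p + (1 / 2) * ‖v - p‖ ^ 2 ≤ α * f y + (1 / 2) * ‖v - y‖ ^ 2)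
    (hproj : xplus ∈ C ∧ ∀ y ∈ C, ‖p - xplus‖ ≤ ‖p - y‖) :
    ‖xplus - x‖ ^ 2 ≤
      ‖v - x‖ ^ 2 + 2 * α * (f x - f p) - ‖v - p‖ ^ 2 - ‖p - xplus‖ ^ 2 := by
  have hprox : inner ℝ (v - p) (x - p) ≤ α * f x - α * f p :=
    (hf.smul hα.le).inner_sub_le_of_isMinOn_add_half_norm_sq (mem_univ p)
      (isMinOn_iff.2 fun y _ => hp y) (mem_univ x)
  have hP : inner ℝ (p - xplus) (x - xplus) ≤ 0 :=
    hCcv.inner_sub_nonpos_of_forall_norm_sub_le hproj.1 hproj.2 hx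
  have hv : ‖v - x‖ ^ 2 = ‖v - p‖ ^ 2 - 2 * inner ℝ (v - p) (x - p) + ‖x - p‖ ^ 2 := by
    rw [← norm_sub_sq_real, sub_sub_sub_cancel_right]
  have hpx : ‖x - p‖ ^ 2 =
      ‖p - xplus‖ ^ 2 - 2 * inner ℝ (p - xplus) (x - xplus) + ‖x - xplus‖ ^ 2 := by
    rw [← norm_sub_sq_real, sub_sub_sub_cancel_right, norm_sub_rev]
  rw [norm_sub_rev xplus x]
  linarith

/-- Basic proximal–projection inequality: with `p = prox_{αf}(v)` and `x⁺ = P_C(p)`, for `x ∈ C`,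
`‖x⁺ - x‖² ≤ ‖v - x‖² + 2α(f x - f p) - ‖v - p‖² - ‖p - x⁺‖²`. -/
theorem prox_projection_basic_inequality
    {d : ℕ} (C : Set (EuclideanSpace ℝ (Fin d)))
    (hCne : C.Nonempty) (hCcl : IsClosed C) (hCcv : Convex ℝ C)
    (f : EuclideanSpace ℝ (Fin d) → ℝ) (hf : ConvexOn ℝ Set.univ f)
    (α : ℝ) (hα : 0 < α) (v x p xplus : EuclideanSpace ℝ (Fin d))
    (hx : x ∈ C)
    (hp : ∀ y, α * f p + (1 / 2) * ‖v - p‖ ^ 2 ≤ α * f y + (1 / 2) * ‖v - y‖ ^ 2)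
    (hproj : xplus ∈ C ∧ ∀ y ∈ C, ‖p - xplus‖ ≤ ‖p - y‖) :
    ‖xplus - x‖ ^ 2 ≤
      ‖v - x‖ ^ 2 + 2 * α * (f x - f p) - ‖v - p‖ ^ 2 - ‖p - xplus‖ ^ 2 :=
  prox_projection_basic_inequality_general C hCcv f hf α hα v x p xplus hx hp hproj
end

section
/- Let C ⊆ ℝ^d be nonempty closed convex, f : ℝ^d → ℝ convex with all subgradients on a set X₀ ⊇ C bounded in norm by M, α > 0, v ∈ ℝ^d, x ∈ C, and z ∈ X₀. If x⁺ := P_C(prox_{αf}(v)), then for all τ, η, μ > 0: ‖x⁺ - x‖² ≤ ‖v - x‖² - 2α(f(z) - f(x)) + (1/τ + 1/η)M²α² + τ‖v - z‖² + (η + μ - 2)‖v - prox_{αf}(v)‖² - (1 - 1/μ)‖x⁺ - v‖². -/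
open scoped RealInnerProductSpace
open Filter Topology Set

/-!
Write `p = prox_{αf}(v)` and `x⁺ = P_C(p)`. The obtuse-angle property of the projection gives
`‖p - x⁺‖² + ‖x⁺ - x‖² ≤ ‖p - x‖²`. Expanding `‖p - x‖²` around `v` and using that `v - p` is a
subgradient of `αf` at `p` bounds it by `‖v - x‖² - ‖v - p‖² + 2α(f x - f p)`. A subgradient `w`
of `f` at `z` (it exists by separating `(z, f z)` from the open strict epigraph, and `‖w‖ ≤ M`)
gives `f z - f p ≤ M(‖v - z‖ + ‖v - p‖)`; Young's inequality with weights `τ` and `η` absorbs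
these cross terms, and `‖p - x⁺‖²` is traded for `‖x⁺ - v‖²` by Young's inequality with
weight `μ`.
-/

theorem two_mul_mul_le_mul_sq_add_sq_div {c : ℝ} (hc : 0 < c) (a b : ℝ) :
    2 * a * b ≤ c * a ^ 2 + b ^ 2 / c := by
  have h : 0 ≤ (c * a - b) ^ 2 / c := by positivity
  have hexp : (c * a - b) ^ 2 / c = c * a ^ 2 - 2 * a * b + b ^ 2 / c := by
    field_simp
    ring
  linarith

theorem ConvexOn.exists_strongDual_subgradient {E : Type*} [NormedAddCommGroup E]
    [NormedSpace ℝ E] [FiniteDimensional ℝ E] {f : E → ℝ} (hf : ConvexOn ℝ univ f) (z : E) :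
    ∃ g : StrongDual ℝ E, ∀ y, f z + g (y - z) ≤ f y := by
  have hcont : Continuous f := continuousOn_univ.mp (hf.continuousOn isOpen_univ)
  have hopen : IsOpen {q : E × ℝ | q.1 ∈ univ ∧ f q.1 < q.2} := by
    simpa using isOpen_lt (hcont.comp continuous_fst) continuous_snd
  obtain ⟨φ, hφ⟩ := geometric_hahn_banach_open_point hf.convex_strict_epigraph hopen
    (x := (z, f z)) (by simp)
  have hsplit : ∀ y t, φ (y, t) = φ (y, 0) + t * φ (0, 1) := by
    intro y t
    rw [← smul_eq_mul, ← map_smul, ← map_add]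
    simp
  set c := φ (0, 1)
  have hc : c < 0 := by
    have := hφ (z, f z + 1) (by simp)
    rw [hsplit z, hsplit z (f z)] at this
    linarith
  -- `(y, f y)` lies in the closure of the strict epigraph.
  have hle : ∀ y, φ (y, f y) ≤ φ (z, f z) := fun y =>
    le_of_tendsto (x := 𝓝[>] f y)
      (((φ.continuous.comp (Continuous.prodMk_right y)).tendsto (f y)).mono_left
        nhdsWithin_le_nhds)
      (eventually_nhdsWithin_of_forall fun t ht => (hφ (y, t) ⟨trivial, ht⟩).le)
  refine ⟨(-c)⁻¹ • φ.comp (ContinuousLinearMap.inl ℝ E ℝ), fun y => ?_⟩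
  have hy := hle y
  rw [hsplit y, hsplit z] at hy
  have hsub : φ (y - z, 0) = φ (y, 0) - φ (z, 0) := by rw [← map_sub]; simp
  simp only [smul_apply, ContinuousLinearMap.comp_apply, ContinuousLinearMap.inl_apply,
    smul_eq_mul, hsub]
  have key : (-c)⁻¹ * (φ (y, 0) - φ (z, 0)) ≤ f y - f z := by
    rw [inv_mul_le_iff₀ (neg_pos.mpr hc)]
    linarith
  linarith

section InnerProduct

variable {F : Type*} [NormedAddCommGroup F] [InnerProductSpace ℝ F]

theorem ConvexOn.exists_subgradient [FiniteDimensional ℝ F] {f : F → ℝ}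
    (hf : ConvexOn ℝ univ f) (z : F) : ∃ w : F, ∀ y, f z + ⟪y - z, w⟫ ≤ f y := by
  obtain ⟨g, hg⟩ := hf.exists_strongDual_subgradient z
  refine ⟨(InnerProductSpace.toDual ℝ F).symm g, fun y => ?_⟩
  rw [real_inner_comm, InnerProductSpace.toDual_symm_apply]
  exact hg y

theorem sub_le_norm_mul_norm_sub_of_subgradient {f : F → ℝ} {z w : F}
    (hw : ∀ y, f z + ⟪y - z, w⟫ ≤ f y) (y : F) : f z - f y ≤ ‖w‖ * ‖z - y‖ := by
  have h := hw y
  rw [← neg_sub z y, inner_neg_left] at h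
  linarith [real_inner_le_norm (z - y) w, mul_comm ‖z - y‖ ‖w‖]

theorem inner_sub_le_of_forall_add_half_norm_sq_le {h : F → ℝ} (hh : ConvexOn ℝ univ h)
    {v p : F} (hp : ∀ y, h p + 1 / 2 * ‖v - p‖ ^ 2 ≤ h y + 1 / 2 * ‖v - y‖ ^ 2) (y : F) :
    ⟪y - p, v - p⟫ ≤ h y - h p := by
  have key : ∀ t ∈ Ioo (0 : ℝ) 1, ⟪y - p, v - p⟫ ≤ h y - h p + t / 2 * ‖y - p‖ ^ 2 := by
    rintro t ⟨ht₀, ht₁⟩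
    have hconv : h (p + t • (y - p)) ≤ (1 - t) * h p + t * h y := by
      have := hh.2 (mem_univ p) (mem_univ y) (by linarith : 0 ≤ 1 - t) ht₀.le (by ring)
      rwa [show (1 - t) • p + t • y = p + t • (y - p) by module] at this
    have hexp : ‖v - (p + t • (y - p))‖ ^ 2
        = ‖v - p‖ ^ 2 - 2 * (t * ⟪y - p, v - p⟫) + t ^ 2 * ‖y - p‖ ^ 2 := by
      rw [show v - (p + t • (y - p)) = (v - p) - t • (y - p) by module, norm_sub_sq_real,
        real_inner_smul_right, real_inner_comm, norm_smul, mul_pow, Real.norm_eq_abs, sq_abs]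
    have hmin := hp (p + t • (y - p))
    rw [hexp] at hmin
    refine le_of_mul_le_mul_left ?_ ht₀
    nlinarith
  have hlim : Tendsto (fun t : ℝ => h y - h p + t / 2 * ‖y - p‖ ^ 2) (𝓝[>] 0)
      (𝓝 (h y - h p)) :=
    tendsto_nhdsWithin_of_tendsto_nhds ((by fun_prop : Continuous fun t : ℝ =>
      h y - h p + t / 2 * ‖y - p‖ ^ 2).tendsto' 0 _ (by simp))
  exact ge_of_tendsto hlim (eventually_of_mem (Ioo_mem_nhdsGT one_pos) key)

theorem real_inner_sub_nonpos_of_forall_norm_sub_le {K : Set F} (hK : Convex ℝ K) {u v : F}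
    (hv : v ∈ K) (hmin : ∀ w ∈ K, ‖u - v‖ ≤ ‖u - w‖) : ∀ w ∈ K, ⟪u - v, w - v⟫ ≤ 0 := by
  have : Nonempty K := ⟨⟨v, hv⟩⟩
  refine (norm_eq_iInf_iff_real_inner_le_zero hK hv).mp (le_antisymm ?_ ?_)
  · exact le_ciInf fun w => hmin w w.2
  · exact ciInf_le (f := fun w : K => ‖u - w‖) ⟨0, by rintro _ ⟨w, rfl⟩; positivity⟩ ⟨v, hv⟩

theorem norm_sub_sq_add_norm_sub_sq_le_of_forall_norm_sub_le {K : Set F} (hK : Convex ℝ K)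
    {u v : F} (hv : v ∈ K) (hmin : ∀ w ∈ K, ‖u - v‖ ≤ ‖u - w‖) {w : F} (hw : w ∈ K) :
    ‖u - v‖ ^ 2 + ‖v - w‖ ^ 2 ≤ ‖u - w‖ ^ 2 := by
  have h := real_inner_sub_nonpos_of_forall_norm_sub_le hK hv hmin w hw
  have hexp : ‖u - w‖ ^ 2 = ‖u - v‖ ^ 2 - 2 * ⟪u - v, w - v⟫ + ‖w - v‖ ^ 2 := by
    rw [← norm_sub_sq_real, sub_sub_sub_cancel_right]
  rw [hexp, norm_sub_rev v w]
  linarith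

theorem one_sub_inv_mul_norm_add_sq_le {μ : ℝ} (hμ : 0 < μ) (a b : F) :
    (1 - 1 / μ) * ‖a + b‖ ^ 2 ≤ ‖a‖ ^ 2 + (μ - 1) * ‖b‖ ^ 2 := by
  have h := sq_nonneg ‖a - (μ - 1) • b‖
  rw [norm_sub_sq_real, real_inner_smul_right, norm_smul, mul_pow, Real.norm_eq_abs, sq_abs] at h
  have key : (μ - 1) * ‖a + b‖ ^ 2 ≤ μ * (‖a‖ ^ 2 + (μ - 1) * ‖b‖ ^ 2) := by
    rw [norm_add_sq_real]
    nlinarith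
  calc (1 - 1 / μ) * ‖a + b‖ ^ 2 = (μ - 1) * ‖a + b‖ ^ 2 / μ := by field_simp
    _ ≤ ‖a‖ ^ 2 + (μ - 1) * ‖b‖ ^ 2 := by rwa [div_le_iff₀' hμ]

end InnerProduct

theorem prox_projection_key_inequality_general
    {d : ℕ} (C X₀ : Set (EuclideanSpace ℝ (Fin d)))
    (hCcv : Convex ℝ C)
    (f : EuclideanSpace ℝ (Fin d) → ℝ) (hf : ConvexOn ℝ Set.univ f)
    (M : ℝ)
    (hM : ∀ z ∈ X₀, ∀ g : EuclideanSpace ℝ (Fin d),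
      (∀ y, f z + ⟪y - z, g⟫ ≤ f y) → ‖g‖ ≤ M)
    (α : ℝ) (hα : 0 < α) (v x z p xplus : EuclideanSpace ℝ (Fin d))
    (hx : x ∈ C) (hz : z ∈ X₀)
    (hp : ∀ y, α * f p + (1 / 2) * ‖v - p‖ ^ 2 ≤ α * f y + (1 / 2) * ‖v - y‖ ^ 2)
    (hproj : xplus ∈ C ∧ ∀ y ∈ C, ‖p - xplus‖ ≤ ‖p - y‖) :
    ∀ τ η μ : ℝ, 0 < τ → 0 < η → 0 < μ →
      ‖xplus - x‖ ^ 2 ≤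
        ‖v - x‖ ^ 2 - 2 * α * (f z - f x) + (1 / τ + 1 / η) * M ^ 2 * α ^ 2
          + τ * ‖v - z‖ ^ 2 + (η + μ - 2) * ‖v - p‖ ^ 2
          - (1 - 1 / μ) * ‖xplus - v‖ ^ 2 := by
  intro τ η μ hτ hη hμ
  obtain ⟨w, hw⟩ := hf.exists_subgradient z
  have hwM : ‖w‖ ≤ M := hM z hz w hw
  have hproj_x := norm_sub_sq_add_norm_sub_sq_le_of_forall_norm_sub_le hCcv hproj.1 hproj.2 hx
  have hprox_x : ⟪x - p, v - p⟫ ≤ α * f x - α * f p :=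
    inner_sub_le_of_forall_add_half_norm_sq_le (hf.smul hα.le) hp x
  have hexp : ‖p - x‖ ^ 2 = ‖v - x‖ ^ 2 - ‖v - p‖ ^ 2 + 2 * ⟪x - p, v - p⟫ := by
    rw [← sub_sub_sub_cancel_right v x p, norm_sub_sq_real (v - p), norm_sub_rev p x,
      real_inner_comm]
    ring
  have hsub : f z - f p ≤ M * (‖v - z‖ + ‖v - p‖) := by
    refine (sub_le_norm_mul_norm_sub_of_subgradient hw p).trans ?_
    rw [norm_sub_rev v z]
    exact mul_le_mul hwM (norm_sub_le_norm_sub_add_norm_sub z v p) (norm_nonneg _)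
      ((norm_nonneg w).trans hwM)
  have hα_sub := mul_le_mul_of_nonneg_left hsub (by positivity : (0 : ℝ) ≤ 2 * α)
  have hyoung_z := two_mul_mul_le_mul_sq_add_sq_div hτ ‖v - z‖ (α * M)
  have hyoung_p := two_mul_mul_le_mul_sq_add_sq_div hη ‖v - p‖ (α * M)
  have hyoung_μ := one_sub_inv_mul_norm_add_sq_le hμ (xplus - p) (p - v)
  rw [sub_add_sub_cancel, norm_sub_rev xplus p, norm_sub_rev p v] at hyoung_μ
  have hM_sq : (α * M) ^ 2 / τ + (α * M) ^ 2 / η = (1 / τ + 1 / η) * M ^ 2 * α ^ 2 := by ring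
  linarith

/-- Key inequality (Lemma 4.1): with `p = prox_{αf}(v)`, `x⁺ = P_C(p)`, `x ∈ C`, `z ∈ X₀`,
subgradients of `f` bounded by `M` on `X₀ ⊇ C`, for all `τ, η, μ > 0`:
`‖x⁺ - x‖² ≤ ‖v - x‖² - 2α(f z - f x) + (1/τ + 1/η)M²α² + τ‖v - z‖²
  + (η + μ - 2)‖v - p‖² - (1 - 1/μ)‖x⁺ - v‖²`. -/
theorem prox_projection_key_inequality
    {d : ℕ} (C X₀ : Set (EuclideanSpace ℝ (Fin d)))
    (hCne : C.Nonempty) (hCcl : IsClosed C) (hCcv : Convex ℝ C)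
    (hCX : C ⊆ X₀)
    (f : EuclideanSpace ℝ (Fin d) → ℝ) (hf : ConvexOn ℝ Set.univ f)
    (M : ℝ)
    (hM : ∀ z ∈ X₀, ∀ g : EuclideanSpace ℝ (Fin d),
      (∀ y, f z + ⟪y - z, g⟫ ≤ f y) → ‖g‖ ≤ M)
    (α : ℝ) (hα : 0 < α) (v x z p xplus : EuclideanSpace ℝ (Fin d))
    (hx : x ∈ C) (hz : z ∈ X₀)
    (hp : ∀ y, α * f p + (1 / 2) * ‖v - p‖ ^ 2 ≤ α * f y + (1 / 2) * ‖v - y‖ ^ 2)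
    (hproj : xplus ∈ C ∧ ∀ y ∈ C, ‖p - xplus‖ ≤ ‖p - y‖) :
    ∀ τ η μ : ℝ, 0 < τ → 0 < η → 0 < μ →
      ‖xplus - x‖ ^ 2 ≤
        ‖v - x‖ ^ 2 - 2 * α * (f z - f x) + (1 / τ + 1 / η) * M ^ 2 * α ^ 2
          + τ * ‖v - z‖ ^ 2 + (η + μ - 2) * ‖v - p‖ ^ 2
          - (1 - 1 / μ) * ‖xplus - v‖ ^ 2 :=
  prox_projection_key_inequality_general C X₀ hCcv f hf M hM α hα v x z p xplus hx hz hp hproj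
end

section
/- Let C ⊆ ℝ^d be nonempty closed convex, f : ℝ^d → ℝ convex, α > 0, v ∈ ℝ^d, x ∈ C, z ∈ ℝ^d, g ∈ ∂f(v), g_z ∈ ∂f(z), and x⁺ := P_C(v - αg). Then for all τ, η > 0: ‖x⁺ - x‖² ≤ ‖v - x‖² - 2α(f(z) - f(x)) + (‖g_z‖²/τ + ‖g‖²/η)α² + τ‖v - z‖² + (η - 1)‖v - x⁺‖². -/
set_option maxHeartbeats 800000


open scoped RealInnerProductSpace

/-- Key inequality (Lemma 3.1): with `g ∈ ∂f(v)`, `g_z ∈ ∂f(z)`, `x⁺ = P_C(v - αg)`, `x ∈ C`,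
for all `τ, η > 0`:
`‖x⁺ - x‖² ≤ ‖v - x‖² - 2α(f z - f x) + (‖g_z‖²/τ + ‖g‖²/η)α² + τ‖v - z‖²
  + (η - 1)‖v - x⁺‖²`. -/
theorem subgradient_projection_key_inequality
    {d : ℕ} (C : Set (EuclideanSpace ℝ (Fin d)))
    (hCne : C.Nonempty) (hCcl : IsClosed C) (hCcv : Convex ℝ C)
    (f : EuclideanSpace ℝ (Fin d) → ℝ) (hf : ConvexOn ℝ Set.univ f)
    (α : ℝ) (hα : 0 < α) (v x z g gz xplus : EuclideanSpace ℝ (Fin d))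
    (hx : x ∈ C)
    (hg : ∀ y, f v + ⟪y - v, g⟫ ≤ f y)
    (hgz : ∀ y, f z + ⟪y - z, gz⟫ ≤ f y)
    (hproj : xplus ∈ C ∧ ∀ y ∈ C, ‖(v - α • g) - xplus‖ ≤ ‖(v - α • g) - y‖) :
    ∀ τ η : ℝ, 0 < τ → 0 < η →
      ‖xplus - x‖ ^ 2 ≤
        ‖v - x‖ ^ 2 - 2 * α * (f z - f x)
          + (‖gz‖ ^ 2 / τ + ‖g‖ ^ 2 / η) * α ^ 2
          + τ * ‖v - z‖ ^ 2 + (η - 1) * ‖v - xplus‖ ^ 2 := by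
  obtain ⟨hxp, hmin⟩ := hproj
  intro τ η hτ hη
  -- projection variational inequality
  have hvar : ⟪(v - α • g) - xplus, x - xplus⟫ ≤ 0 := by
    have h1 : ‖(v - α • g) - xplus‖ = ⨅ w : C, ‖(v - α • g) - w‖ := by
      haveI : Nonempty C := ⟨⟨xplus, hxp⟩⟩
      refine le_antisymm (le_ciInf fun w => hmin w w.2) ?_
      refine ciInf_le ⟨0, ?_⟩ (⟨xplus, hxp⟩ : C)
      rintro b ⟨w, rfl⟩
      positivity
    exact (norm_eq_iInf_iff_real_inner_le_zero hCcv hxp).mp h1 x hx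
  rw [show (v - α • g) - xplus = (v - xplus) - α • g by abel] at hvar
  rw [inner_sub_left, real_inner_smul_left] at hvar
  -- key inner-product facts
  have hsplit : ⟪g, x - xplus⟫ = ⟪g, x - v⟫ + ⟪g, v - xplus⟫ := by
    rw [show x - xplus = (x - v) + (v - xplus) by abel, inner_add_right]
  have hflip : ⟪v - xplus, x - xplus⟫ = -⟪v - xplus, xplus - x⟫ := by
    rw [show x - xplus = -(xplus - x) by abel, inner_neg_right]
  have hid : ‖v - x‖ ^ 2
      = ‖v - xplus‖ ^ 2 + 2 * ⟪v - xplus, xplus - x⟫ + ‖xplus - x‖ ^ 2 := by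
    rw [show v - x = (v - xplus) + (xplus - x) by abel, norm_add_sq_real]
  -- subgradient inequalities
  have hI2 : ⟪g, x - v⟫ ≤ f x - f v := by
    have := hg x; rw [real_inner_comm] at this; linarith
  have hI4 : f z + ⟪v - z, gz⟫ ≤ f v := hgz v
  -- Cauchy-Schwarz
  have hcs1 : -⟪v - z, gz⟫ ≤ ‖v - z‖ * ‖gz‖ := by
    have := abs_real_inner_le_norm (v - z) gz
    cases abs_le.mp this; linarith
  have hcs2 : ⟪g, v - xplus⟫ ≤ ‖g‖ * ‖v - xplus‖ := real_inner_le_norm _ _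
  -- AM-GM / Young inequalities
  have hamgm1 : 2 * α * (‖v - z‖ * ‖gz‖) ≤ α ^ 2 * ‖gz‖ ^ 2 / τ + τ * ‖v - z‖ ^ 2 := by
    have h : 2 * α * (‖v - z‖ * ‖gz‖) - τ * ‖v - z‖ ^ 2 ≤ α ^ 2 * ‖gz‖ ^ 2 / τ := by
      rw [le_div_iff₀ hτ]
      nlinarith [sq_nonneg (α * ‖gz‖ - τ * ‖v - z‖)]
    linarith
  have hamgm2 : 2 * α * (‖g‖ * ‖v - xplus‖) ≤ α ^ 2 * ‖g‖ ^ 2 / η + η * ‖v - xplus‖ ^ 2 := by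
    have h : 2 * α * (‖g‖ * ‖v - xplus‖) - η * ‖v - xplus‖ ^ 2 ≤ α ^ 2 * ‖g‖ ^ 2 / η := by
      rw [le_div_iff₀ hη]
      nlinarith [sq_nonneg (α * ‖g‖ - η * ‖v - xplus‖)]
    linarith
  -- multiply subgradient/CS inequalities by 2α
  have h2α : (0:ℝ) ≤ 2 * α := by linarith
  have m1 : 2 * α * ⟪g, x - v⟫ ≤ 2 * α * (f x - f v) :=
    mul_le_mul_of_nonneg_left hI2 h2α
  have m2 : 2 * α * (-⟪v - z, gz⟫) ≤ 2 * α * (‖v - z‖ * ‖gz‖) :=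
    mul_le_mul_of_nonneg_left hcs1 h2α
  have m3 : 2 * α * ⟪g, v - xplus⟫ ≤ 2 * α * (‖g‖ * ‖v - xplus‖) :=
    mul_le_mul_of_nonneg_left hcs2 h2α
  have m4 : 2 * α * (f x - f v) ≤ 2 * α * (f x - f z - ⟪v - z, gz⟫) :=
    mul_le_mul_of_nonneg_left (by linarith) h2α
  -- the projection inequality scaled by 2
  have hkey : 2 * ⟪v - xplus, x - xplus⟫ ≤ 2 * (α * ⟪g, x - xplus⟫) := by linarith
  have hexp : (‖gz‖ ^ 2 / τ + ‖g‖ ^ 2 / η) * α ^ 2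
      = α ^ 2 * ‖gz‖ ^ 2 / τ + α ^ 2 * ‖g‖ ^ 2 / η := by ring
  rw [hexp]
  have msplit : 2 * α * ⟪g, x - xplus⟫ = 2 * α * ⟪g, x - v⟫ + 2 * α * ⟪g, v - xplus⟫ := by
    rw [hsplit]; ring
  linarith [hid, hkey, hflip, msplit, m1, m2, m3, m4, hamgm1, hamgm2]
end
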